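/- Under the extension setup (S a based scheme on Z with closed subset T̃, based morphism i: U → S with iπ: U → S//T̃ an isomorphism, and Condition (*): |t(ui)| = 1 for all u ∈ U and t ∈ T̃), the closed subset T̃ is normal in S, i.e., sT̃ = T̃s for every s ∈ S. -/
import Mathlib


/-!
Common framework for association schemes, following the paper
"A new semidirect product for association schemes".
-/

/-- The diagonal relation `1_X` on a set `X`. -/
def diagRel (X : Type) : Set (X × X) := {w | w.1 = w.2}

/-- The transpose `s*` of a relation. -/
def transp {X : Type} (s : Set (X × X)) : Set (X × X) := Prod.swap '' s

/-- The structure constant `a_{pqr}`: for `(x,y) ∈ r`, the number of `z` with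
`(x,z) ∈ p` and `(z,y) ∈ q` (well-defined for elements of a scheme). -/
noncomputable def aC {X : Type} (p q r : Set (X × X)) : ℕ :=
  sSup {n | ∃ w ∈ r, n = Nat.card {z : X // (w.1, z) ∈ p ∧ (z, w.2) ∈ q}}

/-- `S` is an association scheme on `X`. -/
def IsScheme {X : Type} (S : Set (Set (X × X))) : Prop :=
  (∀ s ∈ S, s.Nonempty) ∧
  (∀ w : X × X, ∃! s, s ∈ S ∧ w ∈ s) ∧
  diagRel X ∈ S ∧
  (∀ s ∈ S, transp s ∈ S) ∧
  (∀ p ∈ S, ∀ q ∈ S, ∀ r ∈ S, ∀ w ∈ r,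
    Nat.card {z : X // (w.1, z) ∈ p ∧ (z, w.2) ∈ q} = aC p q r)

/-- Complex product of two relations relative to a scheme `S`:
`pq = {r ∈ S : a_{pqr} > 0}`. -/
noncomputable def cmulS {X : Type} (S : Set (Set (X × X))) (p q : Set (X × X)) :
    Set (Set (X × X)) :=
  {r | r ∈ S ∧ 0 < aC p q r}

/-- Complex product of two subsets of a scheme. -/
noncomputable def setMulS {X : Type} (S : Set (Set (X × X)))
    (Pp Qq : Set (Set (X × X))) : Set (Set (X × X)) :=
  ⋃ p ∈ Pp, ⋃ q ∈ Qq, cmulS S p q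

/-- `T` is a closed subset of the scheme `S` (i.e. `T ⊆ S` and `T*T ⊆ T`). -/
def IsClosedIn {X : Type} (S T : Set (Set (X × X))) : Prop :=
  T ⊆ S ∧ ∀ p ∈ T, ∀ q ∈ T, cmulS S (transp p) q ⊆ T

/-- `T` is a normal subset of the scheme `S` (i.e. `pT = Tp` for all `p ∈ S`). -/
noncomputable def IsNormalIn {X : Type} (S T : Set (Set (X × X))) : Prop :=
  ∀ p ∈ S, setMulS S {p} T = setMulS S T {p}

/-- `xs = {y : (x,y) ∈ s}`. -/
def pimg {X : Type} (s : Set (X × X)) (x : X) : Set X := {y | (x, y) ∈ s}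

/-- The coset `xT` of a (closed) subset `T` of a scheme. -/
def coset {X : Type} (T : Set (Set (X × X))) (x : X) : Set X :=
  {y | ∃ t ∈ T, (x, y) ∈ t}

/-- The set `X/T` of cosets. -/
def cosets {X : Type} (T : Set (Set (X × X))) : Set (Set X) :=
  {C | ∃ x, C = coset T x}

/-- The quotient relation `s^T` on cosets. -/
def quotRel {X : Type} (T : Set (Set (X × X))) (s : Set (X × X)) :
    Set (Set X × Set X) :=
  {w | ∃ x₁ x₂, w = (coset T x₁, coset T x₂) ∧
    ∃ p ∈ s, p.1 ∈ coset T x₁ ∧ p.2 ∈ coset T x₂}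

/-- The relations of the quotient scheme `S//T`. -/
def quotS {X : Type} (S T : Set (Set (X × X))) : Set (Set (Set X × Set X)) :=
  {r | ∃ s ∈ S, r = quotRel T s}

/-- A presentation of a (based) scheme: a set of points inside an ambient type,
a set of relations, and a basepoint. -/
structure Pres (P : Type) where
  pts : Set P
  rels : Set (Set (P × P))
  base : P

/-- A scheme `S` on the whole of `X`, based at `x0`, as a presentation. -/
def fullPres {X : Type} (S : Set (Set (X × X))) (x0 : X) : Pres X :=
  ⟨Set.univ, S, x0⟩

/-- The quotient scheme `S//T` on `X/T`, based at `x0 T`, as a presentation. -/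
def quotPres {X : Type} (S T : Set (Set (X × X))) (x0 : X) : Pres (Set X) :=
  ⟨cosets T, quotS S T, coset T x0⟩

/-- The subscheme of a scheme defined by the coset `xT` of a closed subset `T`,
as a presentation. -/
def subPres {X : Type} (T : Set (Set (X × X))) (x : X) : Pres X :=
  ⟨coset T x, {r | ∃ t ∈ T, r = t ∩ (coset T x ×ˢ coset T x)}, x⟩

/-- `f` is a morphism of schemes between two presentations: it maps points to
points, and pairs lying in the same relation to pairs lying in the same relation. -/
def IsMorOn {P Q : Type} (A : Pres P) (B : Pres Q) (f : P → Q) : Prop :=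
  Set.MapsTo f A.pts B.pts ∧
  ∀ s ∈ A.rels, ∀ w ∈ s, ∀ w' ∈ s,
    ∃ t ∈ B.rels, (f w.1, f w.2) ∈ t ∧ (f w'.1, f w'.2) ∈ t

/-- The induced map on scheme elements sends `s` to `t` (i.e. `s φ_S = t`):
every pair of `s` is mapped into `t`. -/
def elemMapsTo {P Q : Type} (f : P → Q) (s : Set (P × P)) (t : Set (Q × Q)) : Prop :=
  ∀ w ∈ s, (f w.1, f w.2) ∈ t

/-- `f` is an isomorphism of schemes: a morphism which is bijective on points and
whose induced map on scheme elements is bijective. -/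
def IsIsoOn {P Q : Type} (A : Pres P) (B : Pres Q) (f : P → Q) : Prop :=
  IsMorOn A B f ∧ Set.BijOn f A.pts B.pts ∧
  ∀ t ∈ B.rels, ∃! s, s ∈ A.rels ∧ elemMapsTo f s t

/-- A based isomorphism of schemes. -/
def IsBasedIsoOn {P Q : Type} (A : Pres P) (B : Pres Q) (f : P → Q) : Prop :=
  IsIsoOn A B f ∧ f A.base = B.base

/-- A based association scheme on a finite based set. -/
structure BScheme : Type 1 where
  X : Type
  fin : Fintype X
  base : X
  S : Set (Set (X × X))
  isScheme : IsScheme S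

/-- A morphism in the category 𝒞: a normal closed subset on each side together
with a based isomorphism between the corresponding quotient schemes. -/
structure HomC (A B : BScheme) where
  TN : Set (Set (A.X × A.X))
  UN : Set (Set (B.X × B.X))
  TN_cl : IsClosedIn A.S TN
  TN_n : IsNormalIn A.S TN
  UN_cl : IsClosedIn B.S UN
  UN_n : IsNormalIn B.S UN
  f : Set A.X → Set B.X
  iso : IsBasedIsoOn (quotPres A.S TN A.base) (quotPres B.S UN B.base) f

/-- `t^{T_φ} φ̃ = u^{U_φ}`: the induced map on quotient scheme elements sends
the class of `t` to the class of `u`. -/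
def elemRel {A B : BScheme} (φ : HomC A B) (t : Set (A.X × A.X))
    (u : Set (B.X × B.X)) : Prop :=
  elemMapsTo φ.f (quotRel φ.TN t) (quotRel φ.UN u)

/-- The normal closed subset `T_{φψ}` of the composite. -/
def Tcomp {A B C : BScheme} (φ : HomC A B) (ψ : HomC B C) :
    Set (Set (A.X × A.X)) :=
  {t | t ∈ A.S ∧ ∃ u ∈ B.S, elemRel φ t u ∧ elemRel ψ u (diagRel C.X)}

/-- The normal closed subset `V_{φψ}` of the composite. -/
def Vcomp {A B C : BScheme} (φ : HomC A B) (ψ : HomC B C) :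
    Set (Set (C.X × C.X)) :=
  {v | v ∈ C.S ∧ ∃ u ∈ B.S, elemRel φ (diagRel A.X) u ∧ elemRel ψ u v}

/-- `ρ` is a composite of `φ` and `ψ` in the category 𝒞. -/
def IsComposite {A B C : BScheme} (φ : HomC A B) (ψ : HomC B C) (ρ : HomC A C) : Prop :=
  ρ.TN = Tcomp φ ψ ∧ ρ.UN = Vcomp φ ψ ∧
  ∀ (x : A.X) (y : B.X) (z : C.X),
    φ.f (coset φ.TN x) = coset φ.UN y →
    ψ.f (coset ψ.TN y) = coset ψ.UN z →
    ρ.f (coset (Tcomp φ ψ) x) = coset (Vcomp φ ψ) z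

/-- The identity morphism of 𝒞 at `A`: both normal closed subsets are `{1_X}`
and the isomorphism is the identity of `A//{1_X}`. -/
def IsIdHom {A : BScheme} (ι : HomC A A) : Prop :=
  ι.TN = {diagRel A.X} ∧ ι.UN = {diagRel A.X} ∧
  ∀ x : A.X, ι.f (coset {diagRel A.X} x) = coset {diagRel A.X} x

/-- A `τ_T`-scheme on the based set underlying `T`. -/
structure TauSchemeOn (T : BScheme) where
  rels : Set (Set (T.X × T.X))
  isScheme : IsScheme rels
  alpha : Set (T.X × T.X) → Set (T.X × T.X)
  alpha_bij : Set.BijOn alpha T.S rels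
  alpha_one : alpha (diagRel T.X) = diagRel T.X
  alpha_star : ∀ p ∈ T.S, alpha (transp p) = transp (alpha p)
  alpha_const : ∀ p ∈ T.S, ∀ q ∈ T.S, ∀ r ∈ T.S,
    aC p q r = aC (alpha p) (alpha q) (alpha r)

/-- The based scheme underlying a `τ`-scheme. -/
abbrev TauSchemeOn.toB {T : BScheme} (Z : TauSchemeOn T) : BScheme :=
  ⟨T.X, T.fin, T.base, Z.rels, Z.isScheme⟩

/-- An action `ζ` of a based scheme `U` on a based scheme `T`. -/
structure SchemeAction (U T : BScheme) where
  /-- the `τ`-scheme `ζ_y = (T_y, α^y)` for each `y ∈ Y` -/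
  Z : U.X → TauSchemeOn T
  /-- the morphism `ζ_{y₁}^{y₂} ∈ Hom_𝒞(T_{y₁}, T_{y₂})` -/
  hom : ∀ y1 y2 : U.X, HomC (Z y1).toB (Z y2).toB
  /-- (1) `T_{y*} = T` -/
  base_rels : (Z U.base).rels = T.S
  /-- (1) `α^{y*} = id` -/
  base_alpha : ∀ p, (Z U.base).alpha p = p
  /-- (2) `ζ_y^y` is the identity morphism -/
  hom_refl_TN : ∀ y : U.X, (hom y y).TN = {diagRel T.X}
  hom_refl_UN : ∀ y : U.X, (hom y y).UN = {diagRel T.X}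
  hom_refl_f : ∀ (y : U.X) (x : T.X),
    (hom y y).f (coset {diagRel T.X} x) = coset {diagRel T.X} x
  /-- (3) `ζ_{y₂}^{y₁} = (ζ_{y₁}^{y₂})*` -/
  hom_symm_TN : ∀ y1 y2 : U.X, (hom y2 y1).TN = (hom y1 y2).UN
  hom_symm_UN : ∀ y1 y2 : U.X, (hom y2 y1).UN = (hom y1 y2).TN
  hom_symm_f : ∀ y1 y2 : U.X,
    Set.InvOn (hom y2 y1).f (hom y1 y2).f
      (cosets (hom y1 y2).TN) (cosets (hom y1 y2).UN)
  /-- (4) `ζ_{y₁}^{y₂}(τ)` depends only on the element `u ∈ U` containing `(y₁,y₂)` -/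
  zeta_welldef : ∀ u ∈ U.S, ∀ y1 y2 y1' y2' : U.X, (y1, y2) ∈ u → (y1', y2') ∈ u →
    ∀ Pp : Set (Set (T.X × T.X)),
      {u' | u' ∈ T.S ∧ ∃ t ∈ Pp,
        elemRel (hom y1 y2) ((Z y1).alpha t) ((Z y2).alpha u')} =
      {u' | u' ∈ T.S ∧ ∃ t ∈ Pp,
        elemRel (hom y1' y2') ((Z y1').alpha t) ((Z y2').alpha u')}
  /-- (5) `ζ_{y₁}^{y₃} ≤ ζ_{y₁}^{y₂} ζ_{y₂}^{y₃}` -/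
  le_comp : ∀ y1 y2 y3 : U.X,
    (hom y1 y3).TN ⊆ Tcomp (hom y1 y2) (hom y2 y3) ∧
    (hom y1 y3).UN ⊆ Vcomp (hom y1 y2) (hom y2 y3) ∧
    ∀ x x2 x3 : T.X,
      (hom y1 y2).f (coset (hom y1 y2).TN x) = coset (hom y1 y2).UN x2 →
      (hom y2 y3).f (coset (hom y2 y3).TN x2) = coset (hom y2 y3).UN x3 →
      (hom y1 y3).f (coset (hom y1 y3).TN x) ⊆
        coset (Vcomp (hom y1 y2) (hom y2 y3)) x3

/-- The map `ζ_u` on subsets of `τ` induced by any `(y₁,y₂) ∈ u`. -/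
def SchemeAction.zetaU {U T : BScheme} (act : SchemeAction U T)
    (u : Set (U.X × U.X)) (Pp : Set (Set (T.X × T.X))) : Set (Set (T.X × T.X)) :=
  {u' | ∃ y1 y2 : U.X, (y1, y2) ∈ u ∧ u' ∈ T.S ∧
    ∃ t ∈ Pp, elemRel (act.hom y1 y2) ((act.Z y1).alpha t) ((act.Z y2).alpha u')}

/-- The relation `[u,t]` on `Y × X`. -/
def SchemeAction.rel {U T : BScheme} (act : SchemeAction U T)
    (u : Set (U.X × U.X)) (t : Set (T.X × T.X)) :
    Set ((U.X × T.X) × (U.X × T.X)) :=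
  {w | (w.1.1, w.2.1) ∈ u ∧
    ((act.hom w.1.1 w.2.1).f (coset (act.hom w.1.1 w.2.1).TN w.1.2),
      coset (act.hom w.1.1 w.2.1).UN w.2.2) ∈
      quotRel (act.hom w.1.1 w.2.1).UN ((act.Z w.2.1).alpha t)}

/-- The semidirect product `U ⋉_ζ T` as a set of relations on `Y × X`. -/
def SchemeAction.sdp {U T : BScheme} (act : SchemeAction U T) :
    Set (Set ((U.X × T.X) × (U.X × T.X))) :=
  {r | ∃ u ∈ U.S, ∃ t ∈ T.S, r = act.rel u t}

/-- The valency `n_s = a_{s s* 1}` of a relation. -/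
noncomputable def nval {X : Type} (s : Set (X × X)) : ℕ :=
  aC s (transp s) (diagRel X)

section NormalHelpers

variable {X : Type}

lemma mem_transp' {s : Set (X × X)} {x y : X} : (x, y) ∈ transp s ↔ (y, x) ∈ s := by
  constructor
  · rintro ⟨⟨a, b⟩, hab, h⟩
    obtain ⟨rfl, rfl⟩ : b = x ∧ a = y := by simpa [Prod.ext_iff] using h
    exact hab
  · intro h; exact ⟨(y, x), h, rfl⟩

lemma transp_transp' (s : Set (X × X)) : transp (transp s) = s := by
  ext ⟨x, y⟩; simp [mem_transp']

lemma scheme_unique {S : Set (Set (X × X))} (hS : IsScheme S) {s s' : Set (X × X)}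
    (hs : s ∈ S) (hs' : s' ∈ S) {w : X × X} (h : w ∈ s) (h' : w ∈ s') : s = s' := by
  obtain ⟨r, _, hu⟩ := hS.2.1 w
  rw [hu s ⟨hs, h⟩, hu s' ⟨hs', h'⟩]

lemma scheme_exists_mem {S : Set (Set (X × X))} (hS : IsScheme S) (w : X × X) :
    ∃ s ∈ S, w ∈ s := by
  obtain ⟨r, hr, _⟩ := hS.2.1 w
  exact ⟨r, hr.1, hr.2⟩

variable [Fintype X]

lemma scheme_mem_cmul {S : Set (Set (X × X))} (hS : IsScheme S) {p q r : Set (X × X)}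
    {x y z : X} (hp : p ∈ S) (hq : q ∈ S) (hr : r ∈ S)
    (hxy : (x, y) ∈ r) (h1 : (x, z) ∈ p) (h2 : (z, y) ∈ q) : r ∈ cmulS S p q := by
  refine ⟨hr, ?_⟩
  have h := hS.2.2.2.2 p hp q hq r hr (x, y) hxy
  rw [← h]
  have : Nonempty {z' : X // (x, z') ∈ p ∧ (z', y) ∈ q} := ⟨z, h1, h2⟩
  exact Nat.card_pos

lemma scheme_decomp {S : Set (Set (X × X))} (hS : IsScheme S) {p q r : Set (X × X)}
    {x y : X} (hp : p ∈ S) (hq : q ∈ S) (hr : r ∈ S)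
    (hm : r ∈ cmulS S p q) (hxy : (x, y) ∈ r) : ∃ z, (x, z) ∈ p ∧ (z, y) ∈ q := by
  have h := hS.2.2.2.2 p hp q hq r hr (x, y) hxy
  have hpos : 0 < Nat.card {z' : X // (x, z') ∈ p ∧ (z', y) ∈ q} := by
    rw [h]; exact hm.2
  obtain ⟨⟨z, hz⟩⟩ := (Nat.card_pos_iff.mp hpos).1
  exact ⟨z, hz⟩

lemma scheme_out {S : Set (Set (X × X))} (hS : IsScheme S) {s : Set (X × X)}
    (hs : s ∈ S) (x : X) : ∃ y, (x, y) ∈ s := by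
  obtain ⟨⟨a, b⟩, hab⟩ := hS.1 s hs
  have hdiag : diagRel X ∈ S := hS.2.2.1
  have htr : transp s ∈ S := hS.2.2.2.1 s hs
  have haa : ((a, a) : X × X) ∈ diagRel X := rfl
  have hm : diagRel X ∈ cmulS S s (transp s) :=
    scheme_mem_cmul hS hs htr hdiag haa hab (mem_transp'.mpr hab)
  have hxx : ((x, x) : X × X) ∈ diagRel X := rfl
  obtain ⟨z, hz1, _⟩ := scheme_decomp hS hs htr hdiag hm hxx
  exact ⟨z, hz1⟩

lemma scheme_cmul_transp {S : Set (Set (X × X))} (hS : IsScheme S) {p q r : Set (X × X)}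
    (hp : p ∈ S) (hq : q ∈ S) (hr : r ∈ S) (hm : r ∈ cmulS S p q) :
    transp r ∈ cmulS S (transp q) (transp p) := by
  obtain ⟨⟨x, y⟩, hxy⟩ := hS.1 r hr
  obtain ⟨z, hz1, hz2⟩ := scheme_decomp hS hp hq hr hm hxy
  exact scheme_mem_cmul hS (hS.2.2.2.1 q hq) (hS.2.2.2.1 p hp) (hS.2.2.2.1 r hr)
    (mem_transp'.mpr hxy) (mem_transp'.mpr hz2) (mem_transp'.mpr hz1)

end NormalHelpers


theorem stmt11
    (T U Sch : BScheme) (Tt : Set (Set (Sch.X × Sch.X)))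
    (hTt : IsClosedIn Sch.S Tt)
    (hsub : ∃ g : Sch.X → T.X,
      IsBasedIsoOn (subPres Tt Sch.base) (fullPres T.S T.base) g)
    (i : U.X → Sch.X)
    (himor : IsMorOn (fullPres U.S U.base) (fullPres Sch.S Sch.base) i)
    (hibase : i U.base = Sch.base)
    (hipi : IsBasedIsoOn (fullPres U.S U.base) (quotPres Sch.S Tt Sch.base)
      (fun y => coset Tt (i y)))
    (iS : Set (U.X × U.X) → Set (Sch.X × Sch.X))
    (hiS : ∀ u ∈ U.S, iS u ∈ Sch.S ∧ elemMapsTo i u (iS u))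
    (hcond : ∀ u ∈ U.S, ∀ t ∈ Tt, ∃! s, s ∈ cmulS Sch.S t (iS u)) :
    ∀ s ∈ Sch.S, setMulS Sch.S {s} Tt = setMulS Sch.S Tt {s} := by
  intro s hs
  classical
  haveI := Sch.fin
  have hSch := Sch.isScheme
  have hTsub : Tt ⊆ Sch.S := hTt.1
  have hTne : Tt.Nonempty := by
    obtain ⟨g, ⟨⟨_, _, hrel⟩, _⟩⟩ := hsub
    obtain ⟨t0, ⟨ht0, _⟩, _⟩ := hrel (diagRel T.X) T.isScheme.2.2.1
    obtain ⟨t, ht, _⟩ := ht0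
    exact ⟨t, ht⟩
  have hdiagT : diagRel Sch.X ∈ Tt := by
    obtain ⟨t0, ht0⟩ := hTne
    obtain ⟨⟨a, b⟩, hab⟩ := hSch.1 t0 (hTsub ht0)
    apply hTt.2 t0 ht0 t0 ht0
    exact scheme_mem_cmul hSch (hSch.2.2.2.1 t0 (hTsub ht0)) (hTsub ht0) hSch.2.2.1
      (show ((b, b) : Sch.X × Sch.X) ∈ diagRel Sch.X from rfl) (mem_transp'.mpr hab) hab
  have hTtr : ∀ t ∈ Tt, transp t ∈ Tt := by
    intro t ht
    apply hTt.2 t ht (diagRel Sch.X) hdiagT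
    obtain ⟨⟨a, b⟩, hab⟩ := hSch.1 t (hTsub ht)
    exact scheme_mem_cmul hSch (hSch.2.2.2.1 t (hTsub ht)) hSch.2.2.1
      (hSch.2.2.2.1 t (hTsub ht)) (mem_transp'.mpr hab) (mem_transp'.mpr hab)
      (show ((a, a) : Sch.X × Sch.X) ∈ diagRel Sch.X from rfl)
  have hTmul : ∀ t₁ ∈ Tt, ∀ t₂ ∈ Tt, ∀ r ∈ Sch.S, ∀ x y z : Sch.X,
      (x, y) ∈ t₁ → (y, z) ∈ t₂ → (x, z) ∈ r → r ∈ Tt := by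
    intro t₁ h₁ t₂ h₂ r hr x y z hxy hyz hxz
    have hcl := hTt.2 (transp t₁) (hTtr t₁ h₁) t₂ h₂
    rw [transp_transp'] at hcl
    exact hcl (scheme_mem_cmul hSch (hTsub h₁) (hTsub h₂) hr hxz hxy hyz)
  have hrefl : ∀ x : Sch.X, x ∈ coset Tt x := fun x => ⟨diagRel Sch.X, hdiagT, rfl⟩
  obtain ⟨⟨-, hbij, frel⟩, -⟩ := hipi
  have hmap' : ∀ u₀ ∈ U.S, elemMapsTo (fun y => coset Tt (i y)) u₀ (quotRel Tt (iS u₀)) := by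
    intro u₀ hu₀ w hw
    exact ⟨i w.1, i w.2, rfl, (i w.1, i w.2), (hiS u₀ hu₀).2 w hw, hrefl _, hrefl _⟩
  have chainAll : ∀ p' ∈ Sch.S, ∀ q ∈ Sch.S, ∀ x y : Sch.X, (x, y) ∈ q →
      (∃ z z' t t', t ∈ Tt ∧ t' ∈ Tt ∧ (x, z) ∈ t ∧ (z, z') ∈ p' ∧ (z', y) ∈ t') →
      ∀ x' y' : Sch.X, (x', y') ∈ q →
      ∃ z z' t t', t ∈ Tt ∧ t' ∈ Tt ∧ (x', z) ∈ t ∧ (z, z') ∈ p' ∧ (z', y') ∈ t' := by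
    rintro p' hp' q hq x y hxy ⟨z, z', t, t', ht, ht', h1, h2, h3⟩ x' y' hx'y'
    obtain ⟨h, hhS, hh⟩ := scheme_exists_mem hSch (z, y)
    have hhc : h ∈ cmulS Sch.S p' t' := scheme_mem_cmul hSch hp' (hTsub ht') hhS hh h2 h3
    have hqc : q ∈ cmulS Sch.S t h := scheme_mem_cmul hSch (hTsub ht) hhS hq hxy h1 hh
    obtain ⟨a, ha1, ha2⟩ := scheme_decomp hSch (hTsub ht) hhS hq hqc hx'y'
    obtain ⟨b, hb1, hb2⟩ := scheme_decomp hSch hp' (hTsub ht') hhS hhc ha2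
    exact ⟨a, b, t, t', ht, ht', ha1, hb1, hb2⟩
  have keyL : ∀ u' ∈ U.S, ∀ q ∈ Sch.S, ∀ x y : Sch.X, (x, y) ∈ q →
      (∃ z z' t t', t ∈ Tt ∧ t' ∈ Tt ∧ (x, z) ∈ t ∧ (z, z') ∈ iS u' ∧ (z', y) ∈ t') →
      ∃ t ∈ Tt, q ∈ cmulS Sch.S (iS u') t := by
    intro u' hu' q hq x y hxy hch
    obtain ⟨⟨y₁, y₂⟩, hy12⟩ := U.isScheme.1 u' hu'
    have hp'S : iS u' ∈ Sch.S := (hiS u' hu').1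
    obtain ⟨w, hw⟩ := scheme_out hSch hq (i y₁)
    obtain ⟨z, z', t, t', ht, ht', h1, h2, h3⟩ :=
      chainAll (iS u') hp'S q hq x y hxy hch (i y₁) w hw
    obtain ⟨y₂', -, hy2'⟩ := hbij.2.2
      (show coset Tt w ∈ (quotPres Sch.S Tt Sch.base).pts from ⟨w, rfl⟩)
    have hwy2 : i y₂' ∈ coset Tt w := by rw [← hy2']; exact hrefl _
    obtain ⟨t'', ht''T, ht''⟩ := hwy2
    obtain ⟨e, heS, he⟩ := scheme_exists_mem hSch (z', i y₂')
    have heT : e ∈ Tt := hTmul t' ht' t'' ht''T e heS z' w (i y₂') h3 ht'' he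
    obtain ⟨u'', ⟨hu''S, hy12''⟩, -⟩ := U.isScheme.2.1 (y₁, y₂')
    have hpair'' : (i y₁, i y₂') ∈ iS u'' := (hiS u'' hu''S).2 (y₁, y₂') hy12''
    have hmaps'' : elemMapsTo (fun y => coset Tt (i y)) u'' (quotRel Tt (iS u')) := by
      intro v hv
      have hiv : (i v.1, i v.2) ∈ iS u'' := (hiS u'' hu''S).2 v hv
      obtain ⟨a, b, ta, tb, hta, htb, hma, hmab, hmb⟩ :=
        chainAll (iS u') hp'S (iS u'') (hiS u'' hu''S).1 (i y₁) (i y₂') hpair''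
          ⟨z, z', t, e, ht, heT, h1, h2, he⟩ (i v.1) (i v.2) hiv
      exact ⟨i v.1, i v.2, rfl, (a, b), hmab, ⟨ta, hta, hma⟩,
        ⟨transp tb, hTtr tb htb, mem_transp'.mpr hmb⟩⟩
    have hQ' : quotRel Tt (iS u') ∈ (quotPres Sch.S Tt Sch.base).rels := ⟨iS u', hp'S, rfl⟩
    obtain ⟨uhat, -, huhatuniq⟩ := frel _ hQ'
    have e1 : u' = uhat := huhatuniq u' ⟨hu', hmap' u' hu'⟩
    have e2 : u'' = uhat := huhatuniq u'' ⟨hu''S, hmaps''⟩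
    have hpairp : (i y₁, i y₂') ∈ iS u' := by rw [e2.trans e1.symm] at hpair''; exact hpair''
    exact ⟨transp t'', hTtr t'' ht''T,
      scheme_mem_cmul hSch hp'S (hTsub (hTtr t'' ht''T)) hq hw hpairp (mem_transp'.mpr ht'')⟩
  have hiStr : ∀ u₀ ∈ U.S, iS (transp u₀) = transp (iS u₀) := by
    intro u₀ hu₀
    obtain ⟨⟨a, b⟩, hab⟩ := U.isScheme.1 u₀ hu₀
    have htu : transp u₀ ∈ U.S := U.isScheme.2.2.2.1 u₀ hu₀
    exact scheme_unique hSch (hiS _ htu).1 (hSch.2.2.2.1 _ (hiS u₀ hu₀).1)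
      ((hiS _ htu).2 (b, a) (mem_transp'.mpr hab))
      (mem_transp'.mpr ((hiS u₀ hu₀).2 (a, b) hab))
  have keyR : ∀ u' ∈ U.S, ∀ q ∈ Sch.S, ∀ x y : Sch.X, (x, y) ∈ q →
      (∃ z z' t t', t ∈ Tt ∧ t' ∈ Tt ∧ (x, z) ∈ t ∧ (z, z') ∈ iS u' ∧ (z', y) ∈ t') →
      ∃ t ∈ Tt, q ∈ cmulS Sch.S t (iS u') := by
    rintro u' hu' q hq x y hxy ⟨z, z', t, t', ht, ht', h1, h2, h3⟩
    have htu : transp u' ∈ U.S := U.isScheme.2.2.2.1 u' hu'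
    have hqtr : transp q ∈ Sch.S := hSch.2.2.2.1 q hq
    have h2' : (z', z) ∈ iS (transp u') := by
      rw [hiStr u' hu']; exact mem_transp'.mpr h2
    obtain ⟨t₃, ht₃, hmem⟩ := keyL (transp u') htu (transp q) hqtr y x (mem_transp'.mpr hxy)
      ⟨z', z, transp t', transp t, hTtr t' ht', hTtr t ht,
        mem_transp'.mpr h3, h2', mem_transp'.mpr h1⟩
    have hfin := scheme_cmul_transp hSch (hiS _ htu).1 (hTsub ht₃) hqtr hmem
    rw [transp_transp', hiStr u' hu', transp_transp'] at hfin
    exact ⟨transp t₃, hTtr t₃ ht₃, hfin⟩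
  have hcondL : ∀ u₀ ∈ U.S, ∀ t ∈ Tt, ∀ g₁ ∈ cmulS Sch.S t (iS u₀),
      ∀ g₂ ∈ cmulS Sch.S t (iS u₀), g₁ = g₂ := by
    intro u₀ hu₀ t ht g₁ h₁ g₂ h₂
    obtain ⟨g, -, hg⟩ := hcond u₀ hu₀ t ht
    rw [hg g₁ h₁, hg g₂ h₂]
  have hcondR : ∀ u₀ ∈ U.S, ∀ t ∈ Tt, ∀ g₁ ∈ cmulS Sch.S (iS u₀) t,
      ∀ g₂ ∈ cmulS Sch.S (iS u₀) t, g₁ = g₂ := by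
    intro u₀ hu₀ t ht g₁ h₁ g₂ h₂
    have htu : transp u₀ ∈ U.S := U.isScheme.2.2.2.1 u₀ hu₀
    have conv : ∀ g ∈ cmulS Sch.S (iS u₀) t,
        transp g ∈ cmulS Sch.S (transp t) (iS (transp u₀)) := by
      intro g hm
      rw [hiStr u₀ hu₀]
      exact scheme_cmul_transp hSch (hiS u₀ hu₀).1 (hTsub ht) hm.1 hm
    have heq := hcondL (transp u₀) htu (transp t) (hTtr t ht)
      (transp g₁) (conv g₁ h₁) (transp g₂) (conv g₂ h₂)
    have heq2 := congrArg transp heq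
    rwa [transp_transp', transp_transp'] at heq2
  -- obtain the element u of U corresponding to s
  have hsQ : quotRel Tt s ∈ (quotPres Sch.S Tt Sch.base).rels := ⟨s, hs, rfl⟩
  obtain ⟨u, ⟨hu, humaps⟩, -⟩ := frel _ hsQ
  have hpS : iS u ∈ Sch.S := (hiS u hu).1
  obtain ⟨⟨y₁, y₂⟩, hy12⟩ := U.isScheme.1 u hu
  obtain ⟨x₁, x₂, heq, ⟨a, b⟩, hab, ha, hb⟩ := humaps (y₁, y₂) hy12
  have heq1 : coset Tt (i y₁) = coset Tt x₁ := congrArg Prod.fst heq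
  have heq2 : coset Tt (i y₂) = coset Tt x₂ := congrArg Prod.snd heq
  have ha' : a ∈ coset Tt (i y₁) := by rw [heq1]; exact ha
  have hb' : b ∈ coset Tt (i y₂) := by rw [heq2]; exact hb
  obtain ⟨ta, htaT, hta⟩ := ha'
  obtain ⟨tb, htbT, htb⟩ := hb'
  have hpp : (i y₁, i y₂) ∈ iS u := (hiS u hu).2 (y₁, y₂) hy12
  have hchs : ∃ z z' t t', t ∈ Tt ∧ t' ∈ Tt ∧ (a, z) ∈ t ∧ (z, z') ∈ iS u ∧ (z', b) ∈ t' :=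
    ⟨i y₁, i y₂, transp ta, tb, hTtr ta htaT, htbT, mem_transp'.mpr hta, hpp, htb⟩
  obtain ⟨tℓ, htℓ, hsL⟩ := keyR u hu s hs a b hab hchs
  obtain ⟨t₁, ht₁, hsR⟩ := keyL u hu s hs a b hab hchs
  ext r
  simp only [setMulS, Set.mem_iUnion, Set.mem_singleton_iff, exists_prop, exists_eq_left]
  constructor
  · rintro ⟨t', ht', hr⟩
    have hrS : r ∈ Sch.S := hr.1
    obtain ⟨⟨x, y⟩, hxy⟩ := hSch.1 r hrS
    obtain ⟨z, hz1, hz2⟩ := scheme_decomp hSch hs (hTsub ht') hrS hr hxy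
    obtain ⟨w, hw1, hw2⟩ := scheme_decomp hSch (hTsub htℓ) hpS hs hsL hz1
    obtain ⟨t₂, ht₂, hrR⟩ := keyR u hu r hrS x y hxy ⟨w, z, tℓ, t', htℓ, ht', hw1, hw2, hz2⟩
    obtain ⟨c, hc1, hc2⟩ := scheme_decomp hSch (hTsub ht₂) hpS hrS hrR hxy
    obtain ⟨w', hw'⟩ := scheme_out hSch (hSch.2.2.2.1 tℓ (hTsub htℓ)) c
    obtain ⟨s₂, hs₂S, hs₂⟩ := scheme_exists_mem hSch (w', y)
    have hs₂c : s₂ ∈ cmulS Sch.S tℓ (iS u) :=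
      scheme_mem_cmul hSch (hTsub htℓ) hpS hs₂S hs₂ (mem_transp'.mp hw') hc2
    have hss : s₂ = s := hcondL u hu tℓ htℓ s₂ hs₂c s hsL
    obtain ⟨e, heS, he⟩ := scheme_exists_mem hSch (x, w')
    have heT : e ∈ Tt := hTmul t₂ ht₂ (transp tℓ) (hTtr tℓ htℓ) e heS x c w' hc1 hw' he
    exact ⟨e, heT, scheme_mem_cmul hSch (hTsub heT) hs hrS hxy he (hss ▸ hs₂)⟩
  · rintro ⟨t', ht', hr⟩
    have hrS : r ∈ Sch.S := hr.1
    obtain ⟨⟨x, y⟩, hxy⟩ := hSch.1 r hrS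
    obtain ⟨z, hz1, hz2⟩ := scheme_decomp hSch (hTsub ht') hs hrS hr hxy
    obtain ⟨w, hw1, hw2⟩ := scheme_decomp hSch hpS (hTsub ht₁) hs hsR hz2
    obtain ⟨t₂, ht₂, hrL⟩ := keyL u hu r hrS x y hxy ⟨z, w, t', t₁, ht', ht₁, hz1, hw1, hw2⟩
    obtain ⟨c, hc1, hc2⟩ := scheme_decomp hSch hpS (hTsub ht₂) hrS hrL hxy
    obtain ⟨w', hw'⟩ := scheme_out hSch (hTsub ht₁) c
    obtain ⟨s₂, hs₂S, hs₂⟩ := scheme_exists_mem hSch (x, w')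
    have hs₂c : s₂ ∈ cmulS Sch.S (iS u) t₁ :=
      scheme_mem_cmul hSch hpS (hTsub ht₁) hs₂S hs₂ hc1 hw'
    have hss : s₂ = s := hcondR u hu t₁ ht₁ s₂ hs₂c s hsR
    obtain ⟨e, heS, he⟩ := scheme_exists_mem hSch (w', y)
    have heT : e ∈ Tt :=
      hTmul (transp t₁) (hTtr t₁ ht₁) t₂ ht₂ e heS w' c y (mem_transp'.mpr hw') hc2 he
    exact ⟨e, heT, scheme_mem_cmul hSch hs (hTsub heT) hrS hxy (hss ▸ hs₂) he⟩
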